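/- (Theorem 2, Case 3.) Fix a horizontal position x̂ ∈ [0,D], let 0 < h_min ≤ h_max, and assume X > 0 and x̂ > Ψʰ. If there is no h ∈ [h_min,h_max] with SIR1(x̂,h) = SIR2(x̂,h), then for every h ∈ [h_min,h_max], SIR_S(x̂,h) ≤ max{SIR_S(x̂,h_min), SIR_S(x̂,h_max)}; that is, the optimal altitude lies in {h_min, h_max}. -/
import Mathlib


/-- SIR at the UAV located at (x,0,h). -/
noncomputable def SIR1 (pt pM X Y x h : ℝ) : ℝ :=
  pt * ((x - X) ^ 2 + Y ^ 2 + h ^ 2) / (pM * (x ^ 2 + h ^ 2))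

/-- SIR at the Rx when the UAV is located at (x,0,h). -/
noncomputable def SIR2 (pu κ pM D X Y x h : ℝ) : ℝ :=
  pu * κ * (Y ^ 2 + (D - X) ^ 2) / (pM * ((D - x) ^ 2 + h ^ 2))

/-- SIR of the system. -/
noncomputable def SIRS (pt pu κ pM D X Y x h : ℝ) : ℝ :=
  min (SIR1 pt pM X Y x h) (SIR2 pu κ pM D X Y x h)

/-- The threshold Ψʰ. -/
noncomputable def PsiH (X Y : ℝ) : ℝ := (X ^ 2 + Y ^ 2) / (2 * X)

theorem stmt13 (D X Y pt pu pM κ hmin hmax : ℝ) (hD : 0 < D) (hX0 : 0 ≤ X) (hXD : X ≤ D)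
    (hpt : 0 < pt) (hpu : 0 < pu) (hpM : 0 < pM) (hκ : 0 < κ)
    (hhmin : 0 < hmin) (hhm : hmin ≤ hmax)
    (xhat : ℝ) (hxhat : xhat ∈ Set.Icc (0 : ℝ) D)
    (hX : 0 < X) (hcase : xhat > PsiH X Y)
    (hnocross : ∀ h ∈ Set.Icc hmin hmax,
      SIR1 pt pM X Y xhat h ≠ SIR2 pu κ pM D X Y xhat h) :
    ∀ h ∈ Set.Icc hmin hmax,
      SIRS pt pu κ pM D X Y xhat h ≤
        max (SIRS pt pu κ pM D X Y xhat hmin) (SIRS pt pu κ pM D X Y xhat hmax) := by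
  -- Key sign from the case hypothesis: B - A > 0 where A = (x-X)^2+Y^2, B = x^2
  have hBA : (xhat - X) ^ 2 + Y ^ 2 < xhat ^ 2 := by
    have : (X ^ 2 + Y ^ 2) / (2 * X) < xhat := hcase
    have h2X : 0 < 2 * X := by linarith
    have := (div_lt_iff₀ h2X).mp this
    nlinarith
  -- denominators positive
  have hden1 : ∀ h : ℝ, hmin ≤ h → 0 < pM * (xhat ^ 2 + h ^ 2) := fun h hh => by nlinarith
  have hden2 : ∀ h : ℝ, hmin ≤ h → 0 < pM * ((D - xhat) ^ 2 + h ^ 2) := fun h hh => by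
    have : 0 < h := lt_of_lt_of_le hhmin hh
    positivity
  -- continuity of the difference on the interval
  set g : ℝ → ℝ := fun h => SIR1 pt pM X Y xhat h - SIR2 pu κ pM D X Y xhat h with hg
  have hcont : ContinuousOn g (Set.Icc hmin hmax) := by
    apply ContinuousOn.sub
    · apply ContinuousOn.div (by fun_prop) (by fun_prop)
      intro h hh
      exact ne_of_gt (hden1 h hh.1)
    · apply ContinuousOn.div (by fun_prop) (by fun_prop)
      intro h hh
      exact ne_of_gt (hden2 h hh.1)
  -- constant sign
  have hsign : (∀ h ∈ Set.Icc hmin hmax, SIR1 pt pM X Y xhat h < SIR2 pu κ pM D X Y xhat h) ∨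
      (∀ h ∈ Set.Icc hmin hmax, SIR2 pu κ pM D X Y xhat h < SIR1 pt pM X Y xhat h) := by
    by_contra hc
    push_neg at hc
    obtain ⟨⟨h1, hh1, hge1⟩, ⟨h2, hh2, hge2⟩⟩ := hc
    have hg1 : 0 < g h1 := by
      have := hnocross h1 hh1
      simp only [hg]
      rcases lt_or_eq_of_le hge1 with h | h
      · linarith
      · exact absurd h.symm this
    have hg2 : g h2 < 0 := by
      have := hnocross h2 hh2
      simp only [hg]
      rcases lt_or_eq_of_le hge2 with h | h
      · linarith
      · exact absurd h this
    have hsub : Set.uIcc h1 h2 ⊆ Set.Icc hmin hmax := by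
      rw [← Set.uIcc_of_le hhm]
      exact Set.uIcc_subset_uIcc (by rw [Set.uIcc_of_le hhm]; exact hh1)
        (by rw [Set.uIcc_of_le hhm]; exact hh2)
    have := intermediate_value_uIcc (hcont.mono hsub)
    have h0mem : (0 : ℝ) ∈ Set.uIcc (g h1) (g h2) := by
      rw [Set.mem_uIcc]; right; constructor <;> linarith
    obtain ⟨h0, hh0, hgh0⟩ := this h0mem
    exact hnocross h0 (hsub hh0) (by simp only [hg] at hgh0; linarith)
  -- monotonicity facts
  have mono1 : ∀ h ∈ Set.Icc hmin hmax, SIR1 pt pM X Y xhat h ≤ SIR1 pt pM X Y xhat hmax := by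
    intro h ⟨hl, hr⟩
    unfold SIR1
    rw [div_le_div_iff₀ (hden1 h hl) (hden1 hmax hhm)]
    have hh0 : 0 < h := lt_of_lt_of_le hhmin hl
    have key : (0:ℝ) ≤ pt * pM * ((hmax ^ 2 - h ^ 2) * (xhat ^ 2 - ((xhat - X) ^ 2 + Y ^ 2))) := by
      apply mul_nonneg (mul_pos hpt hpM).le
      apply mul_nonneg (by nlinarith) (by linarith)
    nlinarith [key]
  have mono2 : ∀ h ∈ Set.Icc hmin hmax,
      SIR2 pu κ pM D X Y xhat h ≤ SIR2 pu κ pM D X Y xhat hmin := by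
    intro h ⟨hl, hr⟩
    unfold SIR2
    rw [div_le_div_iff₀ (hden2 h hl) (hden2 hmin le_rfl)]
    have hC : 0 ≤ pu * κ * (Y ^ 2 + (D - X) ^ 2) := by positivity
    have hh0 : 0 < h := lt_of_lt_of_le hhmin hl
    have key : (0:ℝ) ≤ pu * κ * (Y ^ 2 + (D - X) ^ 2) * pM * (h ^ 2 - hmin ^ 2) := by
      apply mul_nonneg (mul_nonneg hC hpM.le) (by nlinarith)
    nlinarith [key]
  intro h hh
  rcases hsign with hs | hs
  · have h1 : SIRS pt pu κ pM D X Y xhat h = SIR1 pt pM X Y xhat h :=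
      min_eq_left (le_of_lt (hs h hh))
    have h2 : SIRS pt pu κ pM D X Y xhat hmax = SIR1 pt pM X Y xhat hmax :=
      min_eq_left (le_of_lt (hs hmax ⟨hhm, le_rfl⟩))
    rw [h1]
    exact le_max_of_le_right (h2 ▸ mono1 h hh)
  · have h1 : SIRS pt pu κ pM D X Y xhat h = SIR2 pu κ pM D X Y xhat h :=
      min_eq_right (le_of_lt (hs h hh))
    have h2 : SIRS pt pu κ pM D X Y xhat hmin = SIR2 pu κ pM D X Y xhat hmin :=
      min_eq_right (le_of_lt (hs hmin ⟨le_rfl, hhm⟩))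
    rw [h1]
    exact le_max_of_le_left (h2 ▸ mono2 h hh)
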